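/- Let π be a permutation of [2n] and F ⊆ [2n]. Suppose for every e ∈ [2n] with π(e) < π(ē) and every f, π(f) ∈ [π(e), π(ē)] iff π(f̄) ∈ [π(e), π(ē)]; and suppose for every e, exactly one of e, ē is in F when (|π(e) − π(ē)| − 1)/2 is even, and both or neither are in F otherwise. Then for every almost-complementary circuit support C (a set of n+1 elements of [2n] containing exactly one complementary pair {e, ē}), the number of elements of C whose π-position lies strictly between π(e) and π(ē) equals (|π(e) − π(ē)| − 1)/2, and the signs assigned to e and ē — alternating along π-order starting from the first element of C and then flipping signs of elements in F — are equal. -/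
import Mathlib

/-- The complementary element: `ī = i + n` modulo `2n`. -/
def bar (n : ℕ) (e : Fin (2 * n)) : Fin (2 * n) :=
  ⟨(e.val + n) % (2 * n), Nat.mod_lt _ (by have := e.isLt; omega)⟩

lemma bar_val {n : ℕ} (g : Fin (2 * n)) :
    (bar n g).val = if g.val < n then g.val + n else g.val - n := by
  have hg := g.isLt
  simp only [bar]
  rcases lt_or_ge g.val n with h | h
  · rw [if_pos h, Nat.mod_eq_of_lt (by omega)]
  · rw [if_neg (by omega)]
    have h2 : g.val + n = (g.val - n) + 1 * (2 * n) := by omega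
    rw [h2, Nat.add_mul_mod_self_right, Nat.mod_eq_of_lt (by omega)]

lemma bar_bar {n : ℕ} (g : Fin (2 * n)) : bar n (bar n g) = g := by
  have hg := g.isLt
  apply Fin.ext
  rw [bar_val, bar_val]
  split_ifs <;> omega

lemma bar_ne {n : ℕ} (g : Fin (2 * n)) : bar n g ≠ g := by
  have hg := g.isLt
  intro h
  have h2 := congrArg Fin.val h
  rw [bar_val] at h2
  split_ifs at h2 <;> omega

lemma bar_inj {n : ℕ} {g h : Fin (2 * n)} (hgh : bar n g = bar n h) : g = h := by
  have := congrArg (bar n) hgh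
  rwa [bar_bar, bar_bar] at this

def rep (n : ℕ) (g : Fin (2 * n)) : Fin (2 * n) := if g.val < n then g else bar n g

lemma rep_cases {n : ℕ} (g h : Fin (2 * n)) (hr : rep n g = rep n h) :
    g = h ∨ g = bar n h := by
  unfold rep at hr
  split_ifs at hr with h1 h2 h2
  · exact Or.inl hr
  · exact Or.inr hr
  · right; rw [← hr, bar_bar]
  · exact Or.inl (bar_inj hr)

lemma rep_lt {n : ℕ} (g : Fin (2 * n)) : (rep n g).val < n := by
  have hg := g.isLt
  unfold rep
  split_ifs with h
  · exact h
  · rw [bar_val, if_neg h]; omega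

lemma card_small (n : ℕ) :
    (Finset.univ.filter (fun g : Fin (2 * n) => g.val < n)).card = n := by
  have h : Finset.univ.filter (fun g : Fin (2 * n) => g.val < n)
      = Finset.univ.map (Fin.castLEEmb (by omega : n ≤ 2 * n)) := by
    ext x
    simp only [Finset.mem_filter, Finset.mem_univ, true_and, Finset.mem_map,
      Fin.castLEEmb_apply]
    constructor
    · intro hx; exact ⟨⟨x.val, hx⟩, Fin.ext rfl⟩
    · rintro ⟨i, rfl⟩; exact i.isLt
  rw [h, Finset.card_map, Finset.card_univ, Fintype.card_fin]

lemma mem_or_bar_mem {n : ℕ} (C : Finset (Fin (2 * n))) (hC : C.card = n + 1)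
    (e : Fin (2 * n)) (he : e ∈ C) (he' : bar n e ∈ C)
    (honly : ∀ f, f ≠ e → f ≠ bar n e → ¬ (f ∈ C ∧ bar n f ∈ C))
    (f : Fin (2 * n)) (hf1 : f ≠ e) (hf2 : f ≠ bar n e) :
    f ∈ C ∨ bar n f ∈ C := by
  by_contra hcon
  push_neg at hcon
  obtain ⟨hfC, hfC'⟩ := hcon
  set D := C.erase (bar n e) with hD
  have hDcard : D.card = n := by rw [hD, Finset.card_erase_of_mem he', hC]; omega
  have hinj : Set.InjOn (rep n) D := by
    intro g hg h hh hr
    rcases rep_cases g h hr with h' | h'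
    · exact h'
    · exfalso
      subst h'
      have hgC : bar n h ∈ C := Finset.mem_of_mem_erase hg
      have hhC : h ∈ C := Finset.mem_of_mem_erase hh
      have hh1 : h ≠ bar n e := Finset.ne_of_mem_erase hh
      have hh2 : h ≠ e := by
        rintro rfl
        exact Finset.ne_of_mem_erase hg rfl
      exact honly h hh2 hh1 ⟨hhC, hgC⟩
  have himg : (D.image (rep n)).card = n := by
    rw [Finset.card_image_of_injOn hinj, hDcard]
  have hfnot : rep n f ∉ D.image (rep n) := by
    intro hmem
    obtain ⟨g, hg, hr⟩ := Finset.mem_image.mp hmem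
    rcases rep_cases g f hr with h' | h'
    · exact hfC (h' ▸ Finset.mem_of_mem_erase hg)
    · exact hfC' (h' ▸ Finset.mem_of_mem_erase hg)
  have hsub : insert (rep n f) (D.image (rep n))
      ⊆ Finset.univ.filter (fun g => g.val < n) := by
    intro x hx
    simp only [Finset.mem_filter, Finset.mem_univ, true_and]
    rcases Finset.mem_insert.mp hx with h' | h'
    · exact h' ▸ rep_lt f
    · obtain ⟨g, _, rfl⟩ := Finset.mem_image.mp h'
      exact rep_lt g
  have hle := Finset.card_le_card hsub
  rw [Finset.card_insert_of_notMem hfnot, himg, card_small] at hle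
  omega

/-- The nesting condition on the permutation `π`. -/
def Nested (n : ℕ) (π : Equiv.Perm (Fin (2 * n))) : Prop :=
  ∀ e f : Fin (2 * n), π e < π (bar n e) →
    ((π e ≤ π f ∧ π f ≤ π (bar n e)) ↔ (π e ≤ π (bar n f) ∧ π (bar n f) ≤ π (bar n e)))

/-- The sign of an element `g` of the almost-complementary set `C`: alternate `+,-,…`
along the `π`-order of `C` and then flip the signs of elements of `F`. -/
def sgn (n : ℕ) (π : Equiv.Perm (Fin (2 * n))) (F C : Finset (Fin (2 * n)))
    (g : Fin (2 * n)) : ℤ :=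
  (if g ∈ F then -1 else 1) * (-1) ^ (C.filter (fun h => π h < π g)).card

lemma key (n : ℕ) (π : Equiv.Perm (Fin (2 * n))) (F : Finset (Fin (2 * n)))
    (hπ : Nested n π)
    (hF : ∀ e : Fin (2 * n),
      if Even ((max (π e).val (π (bar n e)).val - min (π e).val (π (bar n e)).val - 1) / 2)
      then Xor' (e ∈ F) (bar n e ∈ F)
      else (e ∈ F ↔ bar n e ∈ F))
    (C : Finset (Fin (2 * n))) (hC : C.card = n + 1)
    (e : Fin (2 * n)) (he : e ∈ C) (he' : bar n e ∈ C)
    (honly : ∀ f, f ≠ e → f ≠ bar n e → ¬ (f ∈ C ∧ bar n f ∈ C))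
    (hlt : π e < π (bar n e)) :
    (C.filter (fun g =>
        min (π e) (π (bar n e)) < π g ∧ π g < max (π e) (π (bar n e)))).card
      = (max (π e).val (π (bar n e)).val - min (π e).val (π (bar n e)).val - 1) / 2 ∧
    sgn n π F C e = sgn n π F C (bar n e) := by
  have hvlt : (π e).val < (π (bar n e)).val := hlt
  have hmin : min (π e) (π (bar n e)) = π e := min_eq_left hlt.le
  have hmax : max (π e) (π (bar n e)) = π (bar n e) := max_eq_right hlt.le
  have hmin' : min (π e).val (π (bar n e)).val = (π e).val := min_eq_left hvlt.le
  have hmax' : max (π e).val (π (bar n e)).val = (π (bar n e)).val := max_eq_right hvlt.le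
  rw [hmin, hmax, hmin', hmax']
  set S := Finset.univ.filter (fun g => π e < π g ∧ π g < π (bar n e)) with hSdef
  have hSmem : ∀ g, g ∈ S ↔ (π e < π g ∧ π g < π (bar n e)) := by
    intro g; simp [hSdef]
  have hne1 : ∀ g ∈ S, g ≠ e := by
    intro g hg hge
    subst hge
    exact lt_irrefl _ ((hSmem g).mp hg).1
  have hne2 : ∀ g ∈ S, g ≠ bar n e := by
    intro g hg hge
    subst hge
    exact lt_irrefl _ ((hSmem _).mp hg).2
  have hclose : ∀ g ∈ S, bar n g ∈ S := by
    intro g hg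
    obtain ⟨h1, h2⟩ := (hSmem g).mp hg
    have hmem := (hπ e g hlt).mp ⟨h1.le, h2.le⟩
    rw [hSmem]
    constructor
    · refine lt_of_le_of_ne hmem.1 ?_
      intro h
      have h3 : e = bar n g := π.injective h
      apply hne2 g hg
      rw [h3, bar_bar]
    · refine lt_of_le_of_ne hmem.2 ?_
      intro h
      exact hne1 g hg (bar_inj (π.injective h))
  have hcardS : S.card = (π (bar n e)).val - (π e).val - 1 := by
    have himg : S.image π = Finset.Ioo (π e) (π (bar n e)) := by
      ext x
      simp only [Finset.mem_image, Finset.mem_Ioo, hSdef, Finset.mem_filter,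
        Finset.mem_univ, true_and]
      constructor
      · rintro ⟨g, ⟨h1, h2⟩, rfl⟩; exact ⟨h1, h2⟩
      · rintro ⟨h1, h2⟩; exact ⟨π.symm x, by simp [h1, h2], by simp⟩
    have h4 := Finset.card_image_of_injective S π.injective
    rw [himg] at h4
    rw [← h4, Fin.card_Ioo]
  -- A = the target filter set
  set A := C.filter (fun g => π e < π g ∧ π g < π (bar n e)) with hAdef
  have hAmem : ∀ g, g ∈ A ↔ (g ∈ C ∧ g ∈ S) := by
    intro g; simp only [hAdef, Finset.mem_filter, hSmem]
  have hbarnotC : ∀ g ∈ A, bar n g ∉ C := by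
    intro g hg
    obtain ⟨hgC, hgS⟩ := (hAmem g).mp hg
    intro hbC
    exact honly g (hne1 g hgS) (hne2 g hgS) ⟨hgC, hbC⟩
  have hB : S.filter (fun g => ¬ g ∈ C) = A.image (bar n) := by
    ext x
    simp only [Finset.mem_filter, Finset.mem_image]
    constructor
    · rintro ⟨hxS, hxC⟩
      refine ⟨bar n x, ?_, bar_bar x⟩
      rw [hAmem]
      refine ⟨?_, hclose x hxS⟩
      rcases mem_or_bar_mem C hC e he he' honly x (hne1 x hxS) (hne2 x hxS) with h | h
      · exact absurd h hxC
      · exact h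
    · rintro ⟨g, hgA, rfl⟩
      obtain ⟨hgC, hgS⟩ := (hAmem g).mp hgA
      exact ⟨hclose g hgS, hbarnotC g hgA⟩
  have hAS : S.filter (fun g => g ∈ C) = A := by
    ext x
    simp only [Finset.mem_filter, hAmem x]
    tauto
  have hcardB : (S.filter (fun g => ¬ g ∈ C)).card = A.card := by
    rw [hB, Finset.card_image_of_injective _ (fun a b h => bar_inj h)]
  have hsum : A.card + A.card = S.card := by
    have h0 := Finset.card_filter_add_card_filter_not (s := S) (p := fun g => g ∈ C)
    rw [hAS] at h0
    omega
  have hAcard : A.card = ((π (bar n e)).val - (π e).val - 1) / 2 := by omega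
  refine ⟨hAcard, ?_⟩
  -- sign part
  have hcount : (C.filter (fun h => π h < π (bar n e))).card
      = (C.filter (fun h => π h < π e)).card + (A.card + 1) := by
    have hsplit : C.filter (fun h => π h < π (bar n e))
        = (C.filter (fun h => π h < π e)) ∪ insert e A := by
      ext h
      simp only [Finset.mem_filter, Finset.mem_union, Finset.mem_insert, hAdef]
      constructor
      · rintro ⟨hhC, hhlt⟩
        rcases lt_trichotomy (π h) (π e) with h' | h' | h'
        · exact Or.inl ⟨hhC, h'⟩
        · exact Or.inr (Or.inl (π.injective h'))
        · exact Or.inr (Or.inr ⟨hhC, h', hhlt⟩)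
      · rintro (⟨hhC, h'⟩ | rfl | ⟨hhC, h1, h2⟩)
        · exact ⟨hhC, h'.trans hlt⟩
        · exact ⟨he, hlt⟩
        · exact ⟨hhC, h2⟩
    have hdisj : Disjoint (C.filter (fun h => π h < π e)) (insert e A) := by
      rw [Finset.disjoint_left]
      intro x hx hx'
      obtain ⟨hxC, hxlt⟩ := Finset.mem_filter.mp hx
      rcases Finset.mem_insert.mp hx' with rfl | hxA
      · exact lt_irrefl _ hxlt
      · exact lt_asymm hxlt ((Finset.mem_filter.mp hxA).2.1)
    have heA : e ∉ A := by
      intro h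
      exact lt_irrefl _ ((Finset.mem_filter.mp h).2.1)
    rw [hsplit, Finset.card_union_of_disjoint hdisj, Finset.card_insert_of_notMem heA]
  have hFe := hF e
  rw [hmin', hmax', ← hAcard] at hFe
  simp only [sgn]
  rw [hcount, pow_add, pow_add, pow_one]
  by_cases hEv : Even A.card
  · rw [if_pos hEv] at hFe
    rw [Even.neg_one_pow hEv]
    rcases hFe with ⟨h1, h2⟩ | ⟨h1, h2⟩
    · rw [if_pos h1, if_neg h2]; ring
    · rw [if_neg h2, if_pos h1]; ring
  · rw [if_neg hEv] at hFe
    rw [Odd.neg_one_pow (Nat.not_even_iff_odd.mp hEv)]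
    by_cases hmem : e ∈ F
    · rw [if_pos hmem, if_pos (hFe.mp hmem)]; ring
    · rw [if_neg hmem, if_neg (fun h => hmem (hFe.mpr h))]; ring
/-- Under the conditions of the corrected characterization of cyclic-P-matroids, for
every almost-complementary circuit support `C` with complementary pair `{e, ē}`, the
number of elements of `C` strictly between `e` and `ē` in `π`-order is
`(|π e − π ē| − 1) / 2`, and the signs assigned to `e` and `ē` are equal. -/

theorem stmt18 (n : ℕ) (π : Equiv.Perm (Fin (2 * n))) (F : Finset (Fin (2 * n)))
    (hπ : Nested n π)
    (hF : ∀ e : Fin (2 * n),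
      if Even ((max (π e).val (π (bar n e)).val - min (π e).val (π (bar n e)).val - 1) / 2)
      then Xor' (e ∈ F) (bar n e ∈ F)
      else (e ∈ F ↔ bar n e ∈ F))
    (C : Finset (Fin (2 * n))) (hC : C.card = n + 1)
    (e : Fin (2 * n)) (he : e ∈ C) (he' : bar n e ∈ C)
    (honly : ∀ f, f ≠ e → f ≠ bar n e → ¬ (f ∈ C ∧ bar n f ∈ C)) :
    (C.filter (fun g =>
        min (π e) (π (bar n e)) < π g ∧ π g < max (π e) (π (bar n e)))).card
      = (max (π e).val (π (bar n e)).val - min (π e).val (π (bar n e)).val - 1) / 2 ∧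
    sgn n π F C e = sgn n π F C (bar n e) := by
  have hne : π e ≠ π (bar n e) := fun h => bar_ne e (π.injective h).symm
  rcases lt_or_gt_of_ne hne with hlt | hgt
  · exact key n π F hπ hF C hC e he he' honly hlt
  · have he2 : bar n (bar n e) ∈ C := by rw [bar_bar]; exact he
    have honly2 : ∀ f, f ≠ bar n e → f ≠ bar n (bar n e) → ¬ (f ∈ C ∧ bar n f ∈ C) := by
      intro f h1 h2
      rw [bar_bar] at h2
      exact honly f h2 h1
    have hlt2 : π (bar n e) < π (bar n (bar n e)) := by rw [bar_bar]; exact hgt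
    have h := key n π F hπ hF C hC (bar n e) he' he2 honly2 hlt2
    rw [bar_bar] at h
    constructor
    · rw [min_comm (π e), max_comm (π e), min_comm (π e).val, max_comm (π e).val]
      exact h.1
    · exact h.2.symm
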